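/- arXiv:2206.07746 — 4 statements merged into one kernel-verified Lean document; each statement's English description precedes it below -/
import Mathlib

section
/- Let C ≥ 1, d ≥ 1, K ≥ 1. Suppose there are N real graphs, the i-th having (normalized) adjacency matrix A_(i) ∈ ℝ^{m_i×m_i}, node feature matrix X_(i) ∈ ℝ^{m_i×d} and label y_i ∈ {0,…,C−1}, and N' ≥ 1 synthetic graphs, the i-th having adjacency matrix A'_(i) ∈ ℝ^{n_i×n_i}, feature matrix X'_(i) ∈ ℝ^{n_i×d} and label y'_i ∈ {0,…,C−1}. With the K-layer sum-pooling SGC classifier f_W(A,X) = 1ᵀA^K X W ∈ ℝ^C for W ∈ ℝ^{d×C}, define ℓ_T(W) = Σ_{i=1}^{N} ℓ(f_W(A_(i),X_(i)), y_i) and ℓ_S(W) = (1/N') Σ_{i=1}^{N'} ℓ(f_W(A'_(i),X'_(i)), y'_i), where ℓ is the softmax cross-entropy loss. Let L = ((C−1)/(C·N'))·√(Σ_{i=1}^{N'} ‖1ᵀ(A'_(i))^K X'_(i)‖²) and assume L > 0. Fix M > 0, an integer T ≥ 1, set η = M/(√T·L), and let W_0, W_1, …, W_{T−1} ∈ ℝ^{d×C}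 be the gradient-descent iterates W_{t+1} = W_t − η·∇ℓ_S(W_t). Let W* ∈ ℝ^{d×C} and assume (i) ‖W_t − W*‖ ≤ √2·M for all 0 ≤ t ≤ T−1, and (ii) ‖∇ℓ_S(W)‖ ≤ L for all W ∈ ℝ^{d×C}. Then min_{0≤t≤T−1} (ℓ_T(W_t) − ℓ_T(W*)) ≤ (√2·M/T)·Σ_{t=0}^{T−1} ‖∇ℓ_T(W_t) − ∇ℓ_S(W_t)‖ + (3M/(2√T))·((C−1)/(C·N'))·√(Σ_{i=1}^{N'} ‖1ᵀ(A'_(i))^K X'_(i)‖²). -/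
/-!
Log-sum-exp is convex, so the target loss `ℓ_T`, a sum of log-sum-exp terms composed with maps
linear in `W`, satisfies `ℓ_T(W_t) - ℓ_T(W*) ≤ ⟪∇ℓ_T(W_t), W_t - W*⟫`. Split
`∇ℓ_T = (∇ℓ_T - ∇ℓ_S) + ∇ℓ_S`: the first part is at most `√2 M ‖∇ℓ_T(W_t) - ∇ℓ_S(W_t)‖` by
Cauchy–Schwarz, and the second is the regret of gradient descent on `ℓ_S`, whose sum over `t`
telescopes to at most `‖W_0 - W*‖² / (2η) + η T L² / 2`. The step size `η = M / (√T L)` makes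
this `3/2 · M L √T`, and the minimum over `t` is at most the average.
-/

open scoped BigOperators

/-- The softmax cross-entropy loss of a logit vector `z : ℝ^C` with label `y`. -/
noncomputable def crossEntropy {C : ℕ} (z : Fin C → ℝ) (y : Fin C) : ℝ :=
  Real.log (∑ c, Real.exp (z c)) - z y

/-- The logits of the `K`-layer sum-pooling SGC classifier `1ᵀ A^K X W ∈ ℝ^C`. -/
noncomputable def sgcSumLogits {n d C : ℕ} (K : ℕ)
    (A : Matrix (Fin n) (Fin n) ℝ) (X : Matrix (Fin n) (Fin d) ℝ)
    (W : EuclideanSpace ℝ (Fin d × Fin C)) : Fin C → ℝ :=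
  fun c => ∑ j, (∑ u, ∑ u', (A ^ K) u u' * X u' j) * W (j, c)

open Finset Real
open scoped RealInnerProductSpace

theorem convexOn_log_sum_exp (ι : Type*) [Fintype ι] :
    ConvexOn ℝ Set.univ (fun z : ι → ℝ => log (∑ c, exp (z c))) := by
  rcases isEmpty_or_nonempty ι with _ | _
  · simpa using convexOn_const (log 0) convex_univ
  refine ⟨convex_univ, fun x _ y _ a b ha hb hab => ?_⟩
  set s := a * log (∑ c, exp (x c)) + b * log (∑ c, exp (y c))
  -- Normalizing both softmax distributions reduces the claim to convexity of `exp`.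
  have hnorm : ∀ z : ι → ℝ, ∑ c, exp (z c - log (∑ c, exp (z c))) = 1 := by
    intro z
    have hpos : 0 < ∑ c, exp (z c) := sum_pos (fun c _ => exp_pos _) univ_nonempty
    simp_rw [exp_sub]
    rw [← sum_div, exp_log hpos, div_self hpos.ne']
  have hsum : ∑ c, exp ((a • x + b • y) c) ≤ exp s :=
    calc ∑ c, exp ((a • x + b • y) c)
        = (∑ c, exp (a * (x c - log (∑ c, exp (x c))) + b * (y c - log (∑ c, exp (y c)))))
            * exp s := by
          rw [sum_mul]
          refine sum_congr rfl fun c _ => ?_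
          rw [← exp_add]
          congr 1
          simp only [Pi.add_apply, Pi.smul_apply, smul_eq_mul, s]
          ring
      _ ≤ (∑ c, (a * exp (x c - log (∑ c, exp (x c))) + b * exp (y c - log (∑ c, exp (y c)))))
            * exp s := by
          gcongr with c
          exact convexOn_exp.2 (Set.mem_univ _) (Set.mem_univ _) ha hb hab
      _ = exp s := by
          rw [sum_add_distrib, ← mul_sum, ← mul_sum, hnorm, hnorm, mul_one, mul_one, hab, one_mul]
  calc log (∑ c, exp ((a • x + b • y) c))
      ≤ s := (log_le_iff_le_exp (sum_pos (fun c _ => exp_pos _) univ_nonempty)).2 hsum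
    _ = a • log (∑ c, exp (x c)) + b • log (∑ c, exp (y c)) := rfl

theorem convexOn_crossEntropy {C : ℕ} (y : Fin C) :
    ConvexOn ℝ Set.univ (fun z : Fin C → ℝ => crossEntropy z y) :=
  (convexOn_log_sum_exp (Fin C)).sub ((LinearMap.proj (R := ℝ) y).concaveOn convex_univ)

theorem differentiable_crossEntropy {C : ℕ} (y : Fin C) :
    Differentiable ℝ (fun z : Fin C → ℝ => crossEntropy z y) := fun z =>
  ((DifferentiableAt.fun_sum fun c _ => (differentiableAt_apply c z).exp).log
    (sum_pos (fun _ _ => exp_pos _) ⟨y, mem_univ y⟩).ne').sub (differentiableAt_apply y z)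

theorem ConvexOn.sub_le_apply_sub_of_hasFDerivAt {E : Type*} [NormedAddCommGroup E]
    [NormedSpace ℝ E] {f : E → ℝ} {f' : E →L[ℝ] ℝ} {s : Set E} {x y : E}
    (hf : ConvexOn ℝ s f) (hx : x ∈ s) (hy : y ∈ s) (hfx : HasFDerivAt f f' x) :
    f x - f y ≤ f' (x - y) := by
  -- On the segment from `y` to `x`, the secant slope is at most the derivative at `x`.
  have hline : HasDerivAt (f ∘ AffineMap.lineMap (k := ℝ) y x) (f' (x - y)) 1 := by
    refine HasFDerivAt.comp_hasDerivAt (1 : ℝ) ?_ AffineMap.hasDerivAt_lineMap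
    simpa using hfx
  have hslope := (hf.comp_affineMap (AffineMap.lineMap (k := ℝ) y x)).slope_le_of_hasDerivAt
    (by simpa using hy) (by simpa using hx) one_pos hline
  simpa [slope_def_field] using hslope

theorem ConvexOn.sub_le_inner_gradient {E : Type*} [NormedAddCommGroup E]
    [InnerProductSpace ℝ E] [CompleteSpace E] {f : E → ℝ} {s : Set E} {x y : E}
    (hf : ConvexOn ℝ s f) (hx : x ∈ s) (hy : y ∈ s) (hfx : DifferentiableAt ℝ f x) :
    f x - f y ≤ ⟪gradient f x, x - y⟫ := by
  rw [gradient, InnerProductSpace.toDual_symm_apply]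
  exact hf.sub_le_apply_sub_of_hasFDerivAt hx hy hfx.hasFDerivAt

theorem ConvexOn.fun_sum {𝕜 E β ι : Type*} [Semiring 𝕜] [PartialOrder 𝕜] [AddCommMonoid E]
    [SMul 𝕜 E] [AddCommMonoid β] [PartialOrder β] [IsOrderedAddMonoid β] [Module 𝕜 β]
    {s : Set E} {t : Finset ι} {f : ι → E → β} (hs : Convex 𝕜 s)
    (hf : ∀ i ∈ t, ConvexOn 𝕜 s (f i)) : ConvexOn 𝕜 s (fun x => ∑ i ∈ t, f i x) := by
  classical
  induction t using Finset.induction_on with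
  | empty => simpa using convexOn_const (0 : β) hs
  | insert i t hi ih =>
    simp_rw [sum_insert hi]
    exact (hf i (mem_insert_self i t)).add (ih fun j hj => hf j (mem_insert_of_mem hj))

theorem sum_range_succ_sub_of_eq_succ {a b : ℕ → ℝ} {T : ℕ} (h : ∀ t < T, b t = a (t + 1)) :
    ∑ t ∈ range (T + 1), (a t - b t) = a 0 - b T := by
  rw [sum_range_succ, sum_congr rfl fun t ht => by rw [h t (mem_range.1 ht)], sum_range_sub']
  ring

section GradientDescent

variable {E : Type*} [NormedAddCommGroup E] [InnerProductSpace ℝ E]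

theorem sum_inner_sub_le_of_gradient_step {x g : ℕ → E} {η : ℝ} (hη : 0 < η) {T : ℕ}
    (hstep : ∀ t, t + 2 ≤ T → x (t + 1) = x t - η • g t) (x₀ : E) :
    ∑ t ∈ range T, ⟪g t, x t - x₀⟫ ≤
      ‖x 0 - x₀‖ ^ 2 / (2 * η) + η / 2 * ∑ t ∈ range T, ‖g t‖ ^ 2 := by
  have hstep_eq : ∀ t, ⟪g t, x t - x₀⟫ =
      (‖x t - x₀‖ ^ 2 - ‖x t - η • g t - x₀‖ ^ 2) / (2 * η) + η / 2 * ‖g t‖ ^ 2 := by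
    intro t
    rw [show x t - η • g t - x₀ = (x t - x₀) - η • g t by abel, norm_sub_sq_real (x t - x₀),
      inner_smul_right, norm_smul, Real.norm_of_nonneg hη.le, real_inner_comm]
    field_simp
    ring
  rw [sum_congr rfl fun t _ => hstep_eq t, sum_add_distrib, ← sum_div, ← mul_sum]
  gcongr
  cases T with
  | zero => simp
  | succ T =>
    rw [sum_range_succ_sub_of_eq_succ fun t ht => by rw [hstep t (by omega)]]
    linarith [sq_nonneg ‖x T - η • g T - x₀‖]

variable [CompleteSpace E]

theorem sum_sub_le_of_gradient_step {f h : E → ℝ} (hf : ConvexOn ℝ Set.univ f)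
    (hfd : Differentiable ℝ f) {x : ℕ → E} {η : ℝ} (hη : 0 < η) {T : ℕ}
    (hstep : ∀ t, t + 2 ≤ T → x (t + 1) = x t - η • gradient h (x t)) {x₀ : E} {D L : ℝ}
    (hD : ∀ t < T, ‖x t - x₀‖ ≤ D) (hL : ∀ t < T, ‖gradient h (x t)‖ ≤ L) :
    ∑ t ∈ range T, (f (x t) - f x₀) ≤
      D * ∑ t ∈ range T, ‖gradient f (x t) - gradient h (x t)‖ +
        (‖x 0 - x₀‖ ^ 2 / (2 * η) + η / 2 * (T * L ^ 2)) := by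
  have hterm : ∀ t < T, f (x t) - f x₀ ≤
      D * ‖gradient f (x t) - gradient h (x t)‖ + ⟪gradient h (x t), x t - x₀⟫ := by
    intro t ht
    calc f (x t) - f x₀ ≤ ⟪gradient f (x t), x t - x₀⟫ :=
          hf.sub_le_inner_gradient trivial trivial (hfd _)
      _ = ⟪gradient f (x t) - gradient h (x t), x t - x₀⟫ + ⟪gradient h (x t), x t - x₀⟫ := by
          rw [← inner_add_left, sub_add_cancel]
      _ ≤ ‖gradient f (x t) - gradient h (x t)‖ * D + ⟪gradient h (x t), x t - x₀⟫ := by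
          gcongr
          exact (real_inner_le_norm _ _).trans (by gcongr; exact hD t ht)
      _ = D * ‖gradient f (x t) - gradient h (x t)‖ + ⟪gradient h (x t), x t - x₀⟫ := by
          ring
  have hsq : ∑ t ∈ range T, ‖gradient h (x t)‖ ^ 2 ≤ T * L ^ 2 :=
    calc ∑ t ∈ range T, ‖gradient h (x t)‖ ^ 2 ≤ ∑ _t ∈ range T, L ^ 2 :=
          sum_le_sum fun t ht => pow_le_pow_left₀ (norm_nonneg _) (hL t (mem_range.1 ht)) 2
      _ = T * L ^ 2 := by simp
  calc ∑ t ∈ range T, (f (x t) - f x₀)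
      ≤ ∑ t ∈ range T,
          (D * ‖gradient f (x t) - gradient h (x t)‖ + ⟪gradient h (x t), x t - x₀⟫) :=
        sum_le_sum fun t ht => hterm t (mem_range.1 ht)
    _ = D * ∑ t ∈ range T, ‖gradient f (x t) - gradient h (x t)‖ +
          ∑ t ∈ range T, ⟪gradient h (x t), x t - x₀⟫ := by
        rw [sum_add_distrib, mul_sum]
    _ ≤ _ := by
        gcongr
        exact (sum_inner_sub_le_of_gradient_step hη hstep x₀).trans (by gcongr)

end GradientDescent

noncomputable def sgcSumLogitsLinearMap {n d C : ℕ} (K : ℕ) (A : Matrix (Fin n) (Fin n) ℝ)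
    (X : Matrix (Fin n) (Fin d) ℝ) : EuclideanSpace ℝ (Fin d × Fin C) →ₗ[ℝ] (Fin C → ℝ) where
  toFun := sgcSumLogits K A X
  map_add' V W := by
    funext c
    simp [sgcSumLogits, mul_add, sum_add_distrib]
  map_smul' a W := by
    funext c
    simp [sgcSumLogits, mul_sum, mul_left_comm]

theorem convexOn_crossEntropy_sgcSumLogits {n d C : ℕ} (K : ℕ) (A : Matrix (Fin n) (Fin n) ℝ)
    (X : Matrix (Fin n) (Fin d) ℝ) (y : Fin C) :
    ConvexOn ℝ Set.univ (fun W => crossEntropy (sgcSumLogits K A X W) y) :=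
  (convexOn_crossEntropy y).comp_linearMap (sgcSumLogitsLinearMap K A X)

theorem differentiable_crossEntropy_sgcSumLogits {n d C : ℕ} (K : ℕ)
    (A : Matrix (Fin n) (Fin n) ℝ) (X : Matrix (Fin n) (Fin d) ℝ) (y : Fin C) :
    Differentiable ℝ (fun W => crossEntropy (sgcSumLogits K A X W) y) :=
  (differentiable_crossEntropy y).comp
    (sgcSumLogitsLinearMap K A X).toContinuousLinearMap.differentiable

theorem one_step_gradient_matching_sum_pooling_general
    (C d K N N' : ℕ)
    (m : Fin N → ℕ)
    (A : ∀ i : Fin N, Matrix (Fin (m i)) (Fin (m i)) ℝ)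
    (X : ∀ i : Fin N, Matrix (Fin (m i)) (Fin d) ℝ)
    (y : Fin N → Fin C)
    (n : Fin N' → ℕ)
    (A' : ∀ i : Fin N', Matrix (Fin (n i)) (Fin (n i)) ℝ)
    (X' : ∀ i : Fin N', Matrix (Fin (n i)) (Fin d) ℝ)
    (lossT lossS : EuclideanSpace ℝ (Fin d × Fin C) → ℝ)
    (hlossT : lossT = fun W => ∑ i, crossEntropy (sgcSumLogits K (A i) (X i) W) (y i))
    (L : ℝ)
    (hL : L = (((C : ℝ) - 1) / ((C : ℝ) * (N' : ℝ))) *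
      Real.sqrt (∑ i, ∑ j, (∑ u, ∑ u', ((A' i) ^ K) u u' * X' i u' j) ^ 2))
    (hLpos : 0 < L)
    (M : ℝ) (hM : 0 < M) (T : ℕ) (hT : 1 ≤ T)
    (η : ℝ) (hη : η = M / (Real.sqrt T * L))
    (W : ℕ → EuclideanSpace ℝ (Fin d × Fin C))
    (hstep : ∀ t, t + 2 ≤ T → W (t + 1) = W t - η • gradient lossS (W t))
    (Wstar : EuclideanSpace ℝ (Fin d × Fin C))
    (hbdd : ∀ t < T, ‖W t - Wstar‖ ≤ Real.sqrt 2 * M)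
    (hgrad : ∀ V : EuclideanSpace ℝ (Fin d × Fin C), ‖gradient lossS V‖ ≤ L) :
    ∃ t < T, lossT (W t) - lossT Wstar ≤
      (Real.sqrt 2 * M / T) *
          ∑ t ∈ Finset.range T, ‖gradient lossT (W t) - gradient lossS (W t)‖ +
        (3 * M / (2 * Real.sqrt T)) * (((C : ℝ) - 1) / ((C : ℝ) * (N' : ℝ))) *
          Real.sqrt (∑ i, ∑ j, (∑ u, ∑ u', ((A' i) ^ K) u u' * X' i u' j) ^ 2) := by
  rw [mul_assoc _ (((C : ℝ) - 1) / _), ← hL]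
  have hTpos : (0 : ℝ) < T := by exact_mod_cast hT
  have hηpos : 0 < η := by rw [hη]; positivity
  have hconv : ConvexOn ℝ Set.univ lossT := hlossT ▸
    ConvexOn.fun_sum convex_univ fun i _ => convexOn_crossEntropy_sgcSumLogits K (A i) (X i) (y i)
  have hdiff : Differentiable ℝ lossT := hlossT ▸
    Differentiable.fun_sum fun i _ => differentiable_crossEntropy_sgcSumLogits K (A i) (X i) (y i)
  have hregret := sum_sub_le_of_gradient_step hconv hdiff hηpos hstep hbdd fun t _ => hgrad (W t)
  have hW0 : ‖W 0 - Wstar‖ ^ 2 ≤ (Real.sqrt 2 * M) ^ 2 :=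
    pow_le_pow_left₀ (norm_nonneg _) (hbdd 0 hT) 2
  have hstepsize : (Real.sqrt 2 * M) ^ 2 / (2 * η) + η / 2 * (T * L ^ 2) =
      T * (3 * M / (2 * Real.sqrt T) * L) := by
    rw [hη]
    field_simp
    rw [Real.sq_sqrt two_pos.le, Real.sq_sqrt hTpos.le]
    ring
  obtain ⟨t, ht, hle⟩ := exists_le_of_sum_le (nonempty_range_iff.2 (by omega))
    (calc ∑ t ∈ range T, (lossT (W t) - lossT Wstar)
        ≤ Real.sqrt 2 * M * ∑ t ∈ range T, ‖gradient lossT (W t) - gradient lossS (W t)‖ +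
            ((Real.sqrt 2 * M) ^ 2 / (2 * η) + η / 2 * (T * L ^ 2)) :=
          hregret.trans (by gcongr)
      _ = ∑ _t ∈ range T, (Real.sqrt 2 * M / T *
            ∑ t ∈ range T, ‖gradient lossT (W t) - gradient lossS (W t)‖ +
              3 * M / (2 * Real.sqrt T) * L) := by
          rw [hstepsize, sum_const, card_range, nsmul_eq_mul]
          field_simp)
  exact ⟨t, mem_range.1 ht, hle⟩

/-- Theorem 1 of the paper (sum-pooling case): one-step gradient matching bound for
graph classification with a `K`-layer sum-pooling SGC classifier. -/
theorem one_step_gradient_matching_sum_pooling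
    (C d K N N' : ℕ) (hC : 1 ≤ C) (hd : 1 ≤ d) (hK : 1 ≤ K) (hN' : 1 ≤ N')
    (m : Fin N → ℕ)
    (A : ∀ i : Fin N, Matrix (Fin (m i)) (Fin (m i)) ℝ)
    (X : ∀ i : Fin N, Matrix (Fin (m i)) (Fin d) ℝ)
    (y : Fin N → Fin C)
    (n : Fin N' → ℕ)
    (A' : ∀ i : Fin N', Matrix (Fin (n i)) (Fin (n i)) ℝ)
    (X' : ∀ i : Fin N', Matrix (Fin (n i)) (Fin d) ℝ)
    (y' : Fin N' → Fin C)
    (lossT lossS : EuclideanSpace ℝ (Fin d × Fin C) → ℝ)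
    (hlossT : lossT = fun W => ∑ i, crossEntropy (sgcSumLogits K (A i) (X i) W) (y i))
    (hlossS : lossS = fun W =>
      (1 / (N' : ℝ)) * ∑ i, crossEntropy (sgcSumLogits K (A' i) (X' i) W) (y' i))
    (L : ℝ)
    (hL : L = (((C : ℝ) - 1) / ((C : ℝ) * (N' : ℝ))) *
      Real.sqrt (∑ i, ∑ j, (∑ u, ∑ u', ((A' i) ^ K) u u' * X' i u' j) ^ 2))
    (hLpos : 0 < L)
    (M : ℝ) (hM : 0 < M) (T : ℕ) (hT : 1 ≤ T)
    (η : ℝ) (hη : η = M / (Real.sqrt T * L))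
    (W : ℕ → EuclideanSpace ℝ (Fin d × Fin C))
    (hstep : ∀ t, t + 2 ≤ T → W (t + 1) = W t - η • gradient lossS (W t))
    (Wstar : EuclideanSpace ℝ (Fin d × Fin C))
    (hbdd : ∀ t < T, ‖W t - Wstar‖ ≤ Real.sqrt 2 * M)
    (hgrad : ∀ V : EuclideanSpace ℝ (Fin d × Fin C), ‖gradient lossS V‖ ≤ L) :
    ∃ t < T, lossT (W t) - lossT Wstar ≤
      (Real.sqrt 2 * M / T) *
          ∑ t ∈ Finset.range T, ‖gradient lossT (W t) - gradient lossS (W t)‖ +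
        (3 * M / (2 * Real.sqrt T)) * (((C : ℝ) - 1) / ((C : ℝ) * (N' : ℝ))) *
          Real.sqrt (∑ i, ∑ j, (∑ u, ∑ u', ((A' i) ^ K) u u' * X' i u' j) ^ 2) :=
  one_step_gradient_matching_sum_pooling_general C d K N N' m A X y n A' X' lossT lossS hlossT L hL
    hLpos M hM T hT η hη W hstep Wstar hbdd hgrad
end

section
/- Let C ≥ 1, d ≥ 1, K ≥ 1. Let a real graph have adjacency matrix A ∈ ℝ^{N×N}, feature matrix X ∈ ℝ^{N×d} and node labels y_v ∈ {0,…,C−1} for v = 1,…,N, and let a synthetic graph have adjacency matrix A' ∈ ℝ^{N'×N'} with N' ≥ 1, feature matrix X' ∈ ℝ^{N'×d} and node labels y'_v. With the K-layer SGC node classifier f_W(A,X) = A^K X W ∈ ℝ^{N×C} for W ∈ ℝ^{d×C}, define ℓ_T(W) = Σ_{v=1}^{N} ℓ((A^K X W)_v, y_v) (the v-th row of logits) and ℓ_S(W) = (1/N') Σ_{v=1}^{N'} ℓ(((A')^K X' W)_v, y'_v), where ℓ is the softmax cross-entropy loss. Let L = ((C−1)/(C·N'))·‖(A')^K X'‖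 (Frobenius norm) and assume L > 0. Fix M > 0, an integer T ≥ 1, set η = M/(√T·L), and let W_{t+1} = W_t − η·∇ℓ_S(W_t) starting from W_0 ∈ ℝ^{d×C}. Let W* ∈ ℝ^{d×C} and assume (i) ‖W_t − W*‖ ≤ √2·M for all 0 ≤ t ≤ T−1, and (ii) ‖∇ℓ_S(W)‖ ≤ L for all W. Then min_{0≤t≤T−1} (ℓ_T(W_t) − ℓ_T(W*)) ≤ (√2·M/T)·Σ_{t=0}^{T−1} ‖∇ℓ_T(W_t) − ∇ℓ_S(W_t)‖ + (3M/(2√T))·((C−1)/(C·N'))·‖(A')^K X'‖. -/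
/-!
The training loss `ℓ_T` lies above its tangent planes: for each node this is Jensen's inequality
for `exp` with the softmax weights of the logits, and the logits are linear in `W`. Hence
`ℓ_T(W_t) - ℓ_T(W*) ≤ ⟪∇ℓ_T(W_t), W_t - W*⟫`, which splits as
`⟪∇ℓ_T(W_t) - ∇ℓ_S(W_t), W_t - W*⟫ + ⟪∇ℓ_S(W_t), W_t - W*⟫`. Cauchy–Schwarz and
`‖W_t - W*‖ ≤ √2 M` bound the first term; summed over `t`, the second is the regret of gradient
descent on `ℓ_S`, which telescopes to at most `(‖W_0 - W*‖² + η² T L²) / (2η) = (3/2) M L √T`.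
The minimum over `t < T` is at most the average.
-/

open scoped BigOperators

/-- The logits of node `v` under the `K`-layer SGC node classifier `A^K X W`. -/
noncomputable def sgcNodeLogits {n d C : ℕ} (K : ℕ)
    (A : Matrix (Fin n) (Fin n) ℝ) (X : Matrix (Fin n) (Fin d) ℝ)
    (W : EuclideanSpace ℝ (Fin d × Fin C)) (v : Fin n) : Fin C → ℝ :=
  fun c => ∑ j, (∑ u, (A ^ K) v u * X u j) * W (j, c)

open Real InnerProductSpace Finset

theorem sum_softmax_mul_sub_le_log_sum_exp_sub {ι : Type*} [Fintype ι] [Nonempty ι]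
    (a b : ι → ℝ) :
    ∑ i, exp (a i) / (∑ j, exp (a j)) * (b i - a i) ≤
      log (∑ i, exp (b i)) - log (∑ i, exp (a i)) := by
  set S := ∑ j, exp (a j)
  have hS : 0 < S := sum_pos (fun i _ => exp_pos _) univ_nonempty
  have hS' : 0 < ∑ i, exp (b i) := sum_pos (fun i _ => exp_pos _) univ_nonempty
  have hJensen := convexOn_exp.map_sum_le (t := univ) (w := fun i => exp (a i) / S)
    (p := fun i => b i - a i) (fun i _ => by positivity)
    (by rw [← sum_div, div_self hS.ne']) (fun i _ => Set.mem_univ _)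
  have hweights : ∑ i, exp (a i) / S * exp (b i - a i) = (∑ i, exp (b i)) / S := by
    rw [sum_div]
    refine sum_congr rfl fun i _ => ?_
    rw [exp_sub]; field_simp
  simp only [smul_eq_mul, hweights] at hJensen
  rw [← log_div hS'.ne' hS.ne', le_log_iff_exp_le (div_pos hS' hS)]
  exact hJensen

noncomputable def crossEntropyFDeriv {C : ℕ} (z : Fin C → ℝ) (y : Fin C) :
    (Fin C → ℝ) →L[ℝ] ℝ :=
  (∑ c, exp (z c))⁻¹ • ∑ c, exp (z c) • ContinuousLinearMap.proj c -
    ContinuousLinearMap.proj y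

theorem hasFDerivAt_crossEntropy {C : ℕ} (z : Fin C → ℝ) (y : Fin C) :
    HasFDerivAt (fun z => crossEntropy z y) (crossEntropyFDeriv z y) z := by
  have : Nonempty (Fin C) := ⟨y⟩
  have hsum : HasFDerivAt (fun z : Fin C → ℝ => ∑ c, exp (z c))
      (∑ c, exp (z c) • ContinuousLinearMap.proj c) z :=
    HasFDerivAt.fun_sum fun c _ => (hasFDerivAt_apply c z).exp
  have hpos : 0 < ∑ c, exp (z c) := sum_pos (fun c _ => exp_pos _) univ_nonempty
  exact (hsum.log hpos.ne').sub (hasFDerivAt_apply y z)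

theorem crossEntropy_add_fderiv_le {C : ℕ} (z z' : Fin C → ℝ) (y : Fin C) :
    crossEntropy z y + crossEntropyFDeriv z y (z' - z) ≤ crossEntropy z' y := by
  have : Nonempty (Fin C) := ⟨y⟩
  have h := sum_softmax_mul_sub_le_log_sum_exp_sub z z'
  simp only [crossEntropy, crossEntropyFDeriv, sub_apply,
    smul_apply, FunLike.coe_sum, Fintype.sum_apply,
    ContinuousLinearMap.proj_apply, Pi.sub_apply, smul_eq_mul, mul_sum] at h ⊢
  simp only [div_eq_inv_mul, mul_assoc] at h
  linarith

theorem sub_le_inner_gradient_of_hasFDerivAt {E : Type*} [NormedAddCommGroup E]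
    [InnerProductSpace ℝ E] [CompleteSpace E] {f : E → ℝ} {f' : E →L[ℝ] ℝ} {x : E}
    (hf : HasFDerivAt f f' x) (htangent : ∀ x', f x + f' (x' - x) ≤ f x') (x' : E) :
    f x - f x' ≤ ⟪gradient f x, x - x'⟫_ℝ := by
  have h := htangent x'
  rw [inner_gradient_left, hf.fderiv, ← neg_sub x', map_neg]
  linarith

theorem sum_crossEntropy_comp_sub_le_inner_gradient {ι E : Type*} [Fintype ι]
    [NormedAddCommGroup E] [InnerProductSpace ℝ E] [CompleteSpace E] {C : ℕ}
    (Φ : ι → E →L[ℝ] (Fin C → ℝ)) (y : ι → Fin C) (x x' : E) :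
    (∑ v, crossEntropy (Φ v x) (y v)) - ∑ v, crossEntropy (Φ v x') (y v) ≤
      ⟪gradient (fun w => ∑ v, crossEntropy (Φ v w) (y v)) x, x - x'⟫_ℝ := by
  refine sub_le_inner_gradient_of_hasFDerivAt
    (HasFDerivAt.fun_sum fun v _ =>
      (hasFDerivAt_crossEntropy (Φ v x) (y v)).comp x (Φ v).hasFDerivAt) (fun x' => ?_) x'
  simp only [FunLike.coe_sum, Fintype.sum_apply, ContinuousLinearMap.comp_apply,
    Function.comp_apply, ← sum_add_distrib]
  exact sum_le_sum fun v _ => map_sub (Φ v) x' x ▸ crossEntropy_add_fderiv_le _ _ (y v)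

noncomputable def sgcNodeLogitsCLM {n d C : ℕ} (K : ℕ) (A : Matrix (Fin n) (Fin n) ℝ)
    (X : Matrix (Fin n) (Fin d) ℝ) (v : Fin n) :
    EuclideanSpace ℝ (Fin d × Fin C) →L[ℝ] (Fin C → ℝ) :=
  ContinuousLinearMap.pi fun c =>
    ∑ j, (∑ u, (A ^ K) v u * X u j) • EuclideanSpace.proj (j, c)

theorem sgcNodeLogitsCLM_apply {n d C : ℕ} (K : ℕ) (A : Matrix (Fin n) (Fin n) ℝ)
    (X : Matrix (Fin n) (Fin d) ℝ) (v : Fin n) (W : EuclideanSpace ℝ (Fin d × Fin C)) :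
    sgcNodeLogitsCLM K A X v W = sgcNodeLogits K A X W v := by
  ext c
  simp [sgcNodeLogitsCLM, sgcNodeLogits]

theorem sum_crossEntropy_sgcNodeLogits_sub_le_inner_gradient {n d C : ℕ} (K : ℕ)
    (A : Matrix (Fin n) (Fin n) ℝ) (X : Matrix (Fin n) (Fin d) ℝ) (y : Fin n → Fin C)
    (W W' : EuclideanSpace ℝ (Fin d × Fin C)) :
    (∑ v, crossEntropy (sgcNodeLogits K A X W v) (y v)) -
        ∑ v, crossEntropy (sgcNodeLogits K A X W' v) (y v) ≤
      ⟪gradient (fun W => ∑ v, crossEntropy (sgcNodeLogits K A X W v) (y v)) W, W - W'⟫_ℝ := by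
  simpa only [sgcNodeLogitsCLM_apply] using
    sum_crossEntropy_comp_sub_le_inner_gradient (sgcNodeLogitsCLM K A X) y W W'

section GradientDescent

variable {E : Type*} [NormedAddCommGroup E] [InnerProductSpace ℝ E]

theorem norm_sub_smul_sq_eq (u g : E) (η : ℝ) :
    ‖u - η • g‖ ^ 2 = ‖u‖ ^ 2 - 2 * η * ⟪g, u⟫_ℝ + η ^ 2 * ‖g‖ ^ 2 := by
  rw [norm_sub_sq_real, real_inner_smul_right, norm_smul, mul_pow, norm_eq_abs, sq_abs,
    real_inner_comm]
  ring

-- The recursion is only assumed for `t < n`; `w n - η • g n` is the step after the last one.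
theorem two_mul_sum_inner_add_norm_sq_eq_of_gradient_descent {η : ℝ} {g w : ℕ → E} {n : ℕ}
    (hstep : ∀ t < n, w (t + 1) = w t - η • g t) (x : E) :
    2 * η * ∑ t ∈ range (n + 1), ⟪g t, w t - x⟫_ℝ + ‖w n - η • g n - x‖ ^ 2 =
      ‖w 0 - x‖ ^ 2 + η ^ 2 * ∑ t ∈ range (n + 1), ‖g t‖ ^ 2 := by
  induction n with
  | zero =>
    rw [sub_right_comm, norm_sub_smul_sq_eq]
    simp only [zero_add, range_one, sum_singleton]
    ring
  | succ n ih =>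
    have hprev := ih fun t ht => hstep t (by omega)
    rw [← hstep n (by omega)] at hprev
    rw [sum_range_succ _ (n + 1), sum_range_succ _ (n + 1), sub_right_comm, norm_sub_smul_sq_eq]
    linear_combination hprev

theorem sum_inner_le_of_gradient_descent {T : ℕ} {M G : ℝ} {g w : ℕ → E} {x : E}
    (hT : 1 ≤ T) (hM : 0 < M) (hG : 0 < G) (hg : ∀ t, ‖g t‖ ≤ G)
    (hstep : ∀ t, t + 2 ≤ T → w (t + 1) = w t - (M / (√T * G)) • g t)
    (h0 : ‖w 0 - x‖ ≤ √2 * M) :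
    ∑ t ∈ range T, ⟪g t, w t - x⟫_ℝ ≤ 3 / 2 * M * G * √T := by
  obtain ⟨n, rfl⟩ : ∃ n, T = n + 1 := ⟨T - 1, by omega⟩
  set η := M / (√↑(n + 1) * G)
  have hη : 0 < η := by positivity
  have henergy := two_mul_sum_inner_add_norm_sq_eq_of_gradient_descent (n := n)
    (fun t ht => hstep t (by omega)) x
  have hgsq : ∑ t ∈ range (n + 1), ‖g t‖ ^ 2 ≤ (n + 1 : ℕ) * G ^ 2 := by
    simpa only [sum_const, card_range, nsmul_eq_mul] using
      sum_le_sum fun t (_ : t ∈ range (n + 1)) => pow_le_pow_left₀ (norm_nonneg (g t)) (hg t) 2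
  have h0sq : ‖w 0 - x‖ ^ 2 ≤ 2 * M ^ 2 := by
    simpa [mul_pow] using pow_le_pow_left₀ (norm_nonneg _) h0 2
  have hηsq : η ^ 2 * ((n + 1 : ℕ) * G ^ 2) = M ^ 2 := by
    rw [div_pow, mul_pow, sq_sqrt (Nat.cast_nonneg _)]
    field_simp
  have hηlin : 2 * η * (3 / 2 * M * G * √↑(n + 1)) = 3 * M ^ 2 := by
    simp only [η]
    field_simp
  have hbound : 2 * η * ∑ t ∈ range (n + 1), ⟪g t, w t - x⟫_ℝ ≤
      2 * η * (3 / 2 * M * G * √↑(n + 1)) := by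
    linarith [sq_nonneg ‖w n - η • g n - x‖, mul_le_mul_of_nonneg_left hgsq (sq_nonneg η)]
  exact le_of_mul_le_mul_left hbound (by positivity)

end GradientDescent


theorem one_step_gradient_matching_node_classification_general
    (C d K N N' : ℕ)
    (A : Matrix (Fin N) (Fin N) ℝ) (X : Matrix (Fin N) (Fin d) ℝ) (y : Fin N → Fin C)
    (A' : Matrix (Fin N') (Fin N') ℝ) (X' : Matrix (Fin N') (Fin d) ℝ)
    (lossT lossS : EuclideanSpace ℝ (Fin d × Fin C) → ℝ)
    (hlossT : lossT = fun W => ∑ v, crossEntropy (sgcNodeLogits K A X W v) (y v))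
    (L : ℝ)
    (hL : L = (((C : ℝ) - 1) / ((C : ℝ) * (N' : ℝ))) *
      Real.sqrt (∑ v, ∑ j, (∑ u, (A' ^ K) v u * X' u j) ^ 2))
    (hLpos : 0 < L)
    (M : ℝ) (hM : 0 < M) (T : ℕ) (hT : 1 ≤ T)
    (η : ℝ) (hη : η = M / (Real.sqrt T * L))
    (W : ℕ → EuclideanSpace ℝ (Fin d × Fin C))
    (hstep : ∀ t, t + 2 ≤ T → W (t + 1) = W t - η • gradient lossS (W t))
    (Wstar : EuclideanSpace ℝ (Fin d × Fin C))
    (hbdd : ∀ t < T, ‖W t - Wstar‖ ≤ Real.sqrt 2 * M)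
    (hgrad : ∀ V : EuclideanSpace ℝ (Fin d × Fin C), ‖gradient lossS V‖ ≤ L) :
    ∃ t < T, lossT (W t) - lossT Wstar ≤
      (Real.sqrt 2 * M / T) *
          ∑ t ∈ Finset.range T, ‖gradient lossT (W t) - gradient lossS (W t)‖ +
        (3 * M / (2 * Real.sqrt T)) * (((C : ℝ) - 1) / ((C : ℝ) * (N' : ℝ))) *
          Real.sqrt (∑ v, ∑ j, (∑ u, (A' ^ K) v u * X' u j) ^ 2) := by
  have hconvex : ∀ t, lossT (W t) - lossT Wstar ≤ ⟪gradient lossT (W t), W t - Wstar⟫_ℝ := by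
    subst hlossT
    exact fun t => sum_crossEntropy_sgcNodeLogits_sub_le_inner_gradient K A X y (W t) Wstar
  have hregret : ∑ t ∈ Finset.range T, ⟪gradient lossS (W t), W t - Wstar⟫_ℝ ≤
      3 / 2 * M * L * Real.sqrt T :=
    sum_inner_le_of_gradient_descent hT hM hLpos (fun t => hgrad (W t)) (hη ▸ hstep) (hbdd 0 hT)
  have hsplit : ∀ t < T, lossT (W t) - lossT Wstar ≤
      Real.sqrt 2 * M * ‖gradient lossT (W t) - gradient lossS (W t)‖ +
        ⟪gradient lossS (W t), W t - Wstar⟫_ℝ := by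
    intro t ht
    have hcs := real_inner_le_norm (gradient lossT (W t) - gradient lossS (W t)) (W t - Wstar)
    rw [inner_sub_left] at hcs
    nlinarith [hconvex t, hbdd t ht, norm_nonneg (gradient lossT (W t) - gradient lossS (W t))]
  have hTpos : (0 : ℝ) < T := by exact_mod_cast hT
  rw [mul_assoc _ _ (Real.sqrt _), ← hL]
  refine (exists_le_of_sum_le (nonempty_range_iff.mpr (by omega)) ?_).imp
    fun t ⟨ht, hle⟩ => ⟨mem_range.mp ht, hle⟩
  calc ∑ t ∈ Finset.range T, (lossT (W t) - lossT Wstar)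
      ≤ ∑ t ∈ Finset.range T, (Real.sqrt 2 * M * ‖gradient lossT (W t) - gradient lossS (W t)‖ +
          ⟪gradient lossS (W t), W t - Wstar⟫_ℝ) :=
        sum_le_sum fun t ht => hsplit t (mem_range.mp ht)
    _ ≤ Real.sqrt 2 * M * ∑ t ∈ Finset.range T, ‖gradient lossT (W t) - gradient lossS (W t)‖ +
          3 / 2 * M * L * Real.sqrt T := by
        rw [sum_add_distrib, ← mul_sum]
        linarith
    _ = _ := by
        rw [sum_const, card_range, nsmul_eq_mul]
        field_simp
        linear_combination 3 * L * mul_self_sqrt hTpos.le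

/-- Theorem 2 of the paper: one-step gradient matching bound for node classification
with a `K`-layer SGC node classifier. -/
theorem one_step_gradient_matching_node_classification
    (C d K N N' : ℕ) (hC : 1 ≤ C) (hd : 1 ≤ d) (hK : 1 ≤ K) (hN' : 1 ≤ N')
    (A : Matrix (Fin N) (Fin N) ℝ) (X : Matrix (Fin N) (Fin d) ℝ) (y : Fin N → Fin C)
    (A' : Matrix (Fin N') (Fin N') ℝ) (X' : Matrix (Fin N') (Fin d) ℝ)
    (y' : Fin N' → Fin C)
    (lossT lossS : EuclideanSpace ℝ (Fin d × Fin C) → ℝ)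
    (hlossT : lossT = fun W => ∑ v, crossEntropy (sgcNodeLogits K A X W v) (y v))
    (hlossS : lossS = fun W =>
      (1 / (N' : ℝ)) * ∑ v, crossEntropy (sgcNodeLogits K A' X' W v) (y' v))
    (L : ℝ)
    (hL : L = (((C : ℝ) - 1) / ((C : ℝ) * (N' : ℝ))) *
      Real.sqrt (∑ v, ∑ j, (∑ u, (A' ^ K) v u * X' u j) ^ 2))
    (hLpos : 0 < L)
    (M : ℝ) (hM : 0 < M) (T : ℕ) (hT : 1 ≤ T)
    (η : ℝ) (hη : η = M / (Real.sqrt T * L))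
    (W : ℕ → EuclideanSpace ℝ (Fin d × Fin C))
    (hstep : ∀ t, t + 2 ≤ T → W (t + 1) = W t - η • gradient lossS (W t))
    (Wstar : EuclideanSpace ℝ (Fin d × Fin C))
    (hbdd : ∀ t < T, ‖W t - Wstar‖ ≤ Real.sqrt 2 * M)
    (hgrad : ∀ V : EuclideanSpace ℝ (Fin d × Fin C), ‖gradient lossS V‖ ≤ L) :
    ∃ t < T, lossT (W t) - lossT Wstar ≤
      (Real.sqrt 2 * M / T) *
          ∑ t ∈ Finset.range T, ‖gradient lossT (W t) - gradient lossS (W t)‖ +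
        (3 * M / (2 * Real.sqrt T)) * (((C : ℝ) - 1) / ((C : ℝ) * (N' : ℝ))) *
          Real.sqrt (∑ v, ∑ j, (∑ u, (A' ^ K) v u * X' u j) ^ 2) :=
  one_step_gradient_matching_node_classification_general C d K N N' A X y A' X' lossT lossS hlossT L
    hL hLpos M hM T hT η hη W hstep Wstar hbdd hgrad
end

section
/- Let E be a real Hilbert space and let f, g : E → ℝ be differentiable everywhere, with f convex, and denote their gradients by ∇f and ∇g. Let θ* ∈ E, M > 0, L > 0, an integer T ≥ 1, and set η = M/(√T·L). Let θ_0, θ_1, …, θ_{T−1} ∈ E satisfy θ_{t+1} = θ_t − η·∇g(θ_t) for 0 ≤ t ≤ T−2. Assume ‖θ_t − θ*‖ ≤ √2·M for all 0 ≤ t ≤ T−1, and ‖∇g(θ)‖ ≤ L for all θ ∈ E. Then min_{0≤t≤T−1} (f(θ_t) − f(θ*)) ≤ (√2·M/T)·Σ_{t=0}^{T−1} ‖∇f(θ_t) − ∇g(θ_t)‖ + (3·M·L)/(2·√T). -/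
/-!
Each step is a gradient step for `g`, read as an inexact gradient step for the convex `f`.
Expanding `‖θₜ - η ∇g(θₜ) - θ*‖²` and using `f(θₜ) - f(θ*) ≤ ⟪∇f(θₜ), θₜ - θ*⟫` gives the usual
descent inequality, up to the error `2η ‖∇f(θₜ) - ∇g(θₜ)‖ ‖θₜ - θ*‖`. Summed over `t`, the squared
distances telescope, and the smallest suboptimality gap is at most the average one.
-/

open Finset Set RealInnerProductSpace

theorem Finset.sum_range_succ_sub_of_eq_succ {M : Type*} [AddCommGroup M] (a c : ℕ → M) :
    ∀ n : ℕ, (∀ t < n, c t = a (t + 1)) → ∑ t ∈ range (n + 1), (a t - c t) = a 0 - c n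
  | 0, _ => by simp
  | n + 1, h => by
    rw [sum_range_succ, sum_range_succ_sub_of_eq_succ a c n (fun t ht => h t (by omega)),
      h n n.lt_succ_self]
    abel

section InexactGradientDescent

variable {E : Type*} [NormedAddCommGroup E] [InnerProductSpace ℝ E] [CompleteSpace E]
  {f : E → ℝ}

theorem ConvexOn.inner_gradient_le_sub (hconv : ConvexOn ℝ univ f) {x : E}
    (hf : DifferentiableAt ℝ f x) (y : E) : ⟪gradient f x, y - x⟫ ≤ f y - f x := by
  have hline : ConvexOn ℝ univ (f ∘ AffineMap.lineMap (k := ℝ) x y) := by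
    simpa using hconv.comp_affineMap (AffineMap.lineMap (k := ℝ) x y)
  have hderiv : HasDerivAt (f ∘ AffineMap.lineMap (k := ℝ) x y) ⟪gradient f x, y - x⟫ 0 := by
    have hf' : HasFDerivAt f (fderiv ℝ f x) (AffineMap.lineMap x y (0 : ℝ)) := by
      simpa using hf.hasFDerivAt
    simpa [inner_gradient_left] using hf'.comp_hasDerivAt (0 : ℝ) AffineMap.hasDerivAt_lineMap
  simpa [slope] using hline.le_slope_of_hasDerivAt (mem_univ 0) (mem_univ 1) one_pos hderiv

theorem ConvexOn.two_mul_sub_le_of_step (hconv : ConvexOn ℝ univ f) {x : E}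
    (hf : DifferentiableAt ℝ f x) {η : ℝ} (hη : 0 ≤ η) (v y : E) :
    2 * η * (f x - f y) ≤ ‖x - y‖ ^ 2 - ‖x - η • v - y‖ ^ 2 + η ^ 2 * ‖v‖ ^ 2
      + 2 * η * (‖gradient f x - v‖ * ‖x - y‖) := by
  have hexpand : ‖x - η • v - y‖ ^ 2 = ‖x - y‖ ^ 2 - 2 * η * ⟪v, x - y⟫ + η ^ 2 * ‖v‖ ^ 2 := by
    rw [sub_right_comm, norm_sub_sq_real, real_inner_smul_right, real_inner_comm, norm_smul,
      mul_pow, Real.norm_eq_abs, sq_abs]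
    ring
  have hconvex : f x - f y ≤ ⟪v, x - y⟫ + ⟪gradient f x - v, x - y⟫ := by
    have htangent := hconv.inner_gradient_le_sub hf y
    rw [← neg_sub x y, inner_neg_right] at htangent
    rw [← inner_add_left, add_sub_cancel]
    linarith
  have hcs : ⟪gradient f x - v, x - y⟫ ≤ ‖gradient f x - v‖ * ‖x - y‖ := real_inner_le_norm _ _
  have := mul_le_mul_of_nonneg_left (hconvex.trans (add_le_add_right hcs _))
    (by positivity : 0 ≤ 2 * η)
  linarith

theorem ConvexOn.two_mul_sum_sub_le_of_inexact_gradient_steps (hconv : ConvexOn ℝ univ f)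
    (hf : Differentiable ℝ f) (G : E → E) (θ : ℕ → E) (y : E) {η D L : ℝ} (n : ℕ)
    (hη : 0 ≤ η) (hstep : ∀ t < n, θ (t + 1) = θ t - η • G (θ t))
    (hD : ∀ t ≤ n, ‖θ t - y‖ ≤ D) (hL : ∀ t ≤ n, ‖G (θ t)‖ ≤ L) :
    2 * η * ∑ t ∈ range (n + 1), (f (θ t) - f y) ≤
      D ^ 2 + (n + 1) * (η ^ 2 * L ^ 2)
        + 2 * η * D * ∑ t ∈ range (n + 1), ‖gradient f (θ t) - G (θ t)‖ := by
  set a : ℕ → ℝ := fun t => ‖θ t - y‖ ^ 2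
  set c : ℕ → ℝ := fun t => ‖θ t - η • G (θ t) - y‖ ^ 2
  have hsteps : ∀ t ∈ range (n + 1), 2 * η * (f (θ t) - f y) ≤
      (a t - c t) + η ^ 2 * L ^ 2 + 2 * η * D * ‖gradient f (θ t) - G (θ t)‖ := by
    intro t ht
    have htn : t ≤ n := Nat.lt_succ_iff.mp (mem_range.mp ht)
    have hG : η ^ 2 * ‖G (θ t)‖ ^ 2 ≤ η ^ 2 * L ^ 2 := by
      gcongr
      exact hL t htn
    have hdist : 2 * η * (‖gradient f (θ t) - G (θ t)‖ * ‖θ t - y‖)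
        ≤ 2 * η * D * ‖gradient f (θ t) - G (θ t)‖ := by
      have := mul_le_mul_of_nonneg_left (hD t htn)
        (by positivity : 0 ≤ 2 * η * ‖gradient f (θ t) - G (θ t)‖)
      linarith
    linarith [hconv.two_mul_sub_le_of_step (hf (θ t)) hη (G (θ t)) y]
  have htelescope : ∑ t ∈ range (n + 1), (a t - c t) = a 0 - c n :=
    sum_range_succ_sub_of_eq_succ a c n fun t ht => by simp only [a, c, hstep t ht]
  have ha0 : a 0 ≤ D ^ 2 := pow_le_pow_left₀ (norm_nonneg _) (hD 0 n.zero_le) 2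
  have hcn : 0 ≤ c n := by positivity
  calc 2 * η * ∑ t ∈ range (n + 1), (f (θ t) - f y)
      = ∑ t ∈ range (n + 1), 2 * η * (f (θ t) - f y) := mul_sum _ _ _
    _ ≤ ∑ t ∈ range (n + 1),
          ((a t - c t) + η ^ 2 * L ^ 2 + 2 * η * D * ‖gradient f (θ t) - G (θ t)‖) :=
        sum_le_sum hsteps
    _ = (a 0 - c n) + (n + 1) * (η ^ 2 * L ^ 2)
          + 2 * η * D * ∑ t ∈ range (n + 1), ‖gradient f (θ t) - G (θ t)‖ := by
        rw [sum_add_distrib, sum_add_distrib, htelescope, sum_const, card_range, nsmul_eq_mul,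
          mul_sum]
        push_cast
        ring
    _ ≤ _ := by linarith

end InexactGradientDescent

theorem one_step_matching_optimal_rate_general
    {E : Type*} [NormedAddCommGroup E] [InnerProductSpace ℝ E] [CompleteSpace E]
    (f g : E → ℝ) (hf : Differentiable ℝ f)
    (hconv : ConvexOn ℝ Set.univ f)
    (θstar : E) (M L : ℝ) (hM : 0 < M) (hL : 0 < L)
    (T : ℕ) (hT : 1 ≤ T)
    (η : ℝ) (hη : η = M / (Real.sqrt T * L))
    (θ : ℕ → E) (hstep : ∀ t, t + 2 ≤ T → θ (t + 1) = θ t - η • gradient g (θ t))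
    (hbdd : ∀ t < T, ‖θ t - θstar‖ ≤ Real.sqrt 2 * M)
    (hgrad : ∀ x : E, ‖gradient g x‖ ≤ L) :
    ∃ t < T, f (θ t) - f θstar ≤
      (Real.sqrt 2 * M / T) *
          ∑ t ∈ Finset.range T, ‖gradient f (θ t) - gradient g (θ t)‖ +
        3 * M * L / (2 * Real.sqrt T) := by
  obtain ⟨n, rfl⟩ := Nat.exists_eq_add_of_le' hT
  set S := ∑ t ∈ range (n + 1), ‖gradient f (θ t) - gradient g (θ t)‖
  set B := Real.sqrt 2 * M / ↑(n + 1) * S + 3 * M * L / (2 * Real.sqrt ↑(n + 1))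
  have hη0 : 0 < η := hη ▸ by positivity
  have hregret := hconv.two_mul_sum_sub_le_of_inexact_gradient_steps hf (gradient g) θ θstar n
    hη0.le (fun t ht => hstep t (by omega)) (fun t ht => hbdd t (by omega)) (fun t _ => hgrad _)
  -- `η = M / (√T L)` makes `(√2 M) ^ 2 = 2 M ^ 2` and `T η ^ 2 L ^ 2 = M ^ 2` add up to
  -- `2 η T · 3 M L / (2 √T) = 3 M ^ 2`
  have hrate : (Real.sqrt 2 * M) ^ 2 + (n + 1) * (η ^ 2 * L ^ 2) + 2 * η * (Real.sqrt 2 * M) * S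
      = 2 * η * ((n + 1) * B) := by
    have hsqrt : Real.sqrt ((n : ℝ) + 1) ^ 2 = n + 1 := Real.sq_sqrt (by positivity)
    simp only [B, hη]
    field_simp
    rw [Real.sq_sqrt zero_le_two]
    push_cast
    linear_combination 2 * L * (n + 1) * hsqrt
  have hsum : ∑ t ∈ range (n + 1), (f (θ t) - f θstar) ≤ ∑ t ∈ range (n + 1), B := by
    rw [sum_const, card_range, nsmul_eq_mul]
    push_cast
    exact le_of_mul_le_mul_left (hregret.trans_eq hrate) (by positivity)
  obtain ⟨t, ht, hle⟩ := exists_le_of_sum_le nonempty_range_add_one hsum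
  exact ⟨t, mem_range.mp ht, hle⟩

/-- Abstract form of Theorem 1 with the optimal learning rate `η = M / (√T · L)`. -/
theorem one_step_matching_optimal_rate
    {E : Type*} [NormedAddCommGroup E] [InnerProductSpace ℝ E] [CompleteSpace E]
    (f g : E → ℝ) (hf : Differentiable ℝ f) (hg : Differentiable ℝ g)
    (hconv : ConvexOn ℝ Set.univ f)
    (θstar : E) (M L : ℝ) (hM : 0 < M) (hL : 0 < L)
    (T : ℕ) (hT : 1 ≤ T)
    (η : ℝ) (hη : η = M / (Real.sqrt T * L))
    (θ : ℕ → E) (hstep : ∀ t, t + 2 ≤ T → θ (t + 1) = θ t - η • gradient g (θ t))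
    (hbdd : ∀ t < T, ‖θ t - θstar‖ ≤ Real.sqrt 2 * M)
    (hgrad : ∀ x : E, ‖gradient g x‖ ≤ L) :
    ∃ t < T, f (θ t) - f θstar ≤
      (Real.sqrt 2 * M / T) *
          ∑ t ∈ Finset.range T, ‖gradient f (θ t) - gradient g (θ t)‖ +
        3 * M * L / (2 * Real.sqrt T) :=
  one_step_matching_optimal_rate_general f g hf hconv θstar M L hM hL T hT η hη θ hstep hbdd hgrad
end

section
/- Let E be a real Hilbert space and let f, g : E → ℝ be differentiable everywhere, with f convex, and denote their gradients by ∇f and ∇g. Let θ* ∈ E, η > 0, an integer T ≥ 1, and let θ_0, θ_1, …, θ_T ∈ E satisfy θ_{t+1} = θ_t − η·∇g(θ_t) for 0 ≤ t ≤ T−1. Then Σ_{t=0}^{T−1} (f(θ_t) − f(θ*)) ≤ Σ_{t=0}^{T−1} ⟨∇f(θ_t) − ∇g(θ_t), θ_t − θ*⟩ + (η/2)·Σ_{t=0}^{T−1} ‖∇g(θ_t)‖² + (1/(2η))·‖θ_0 − θ*‖². -/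
/-!
Convexity gives `f θₜ - f θ* ≤ ⟪∇f θₜ, θₜ - θ*⟫`. Split `∇f θₜ = (∇f θₜ - ∇g θₜ) + ∇g θₜ`;
expanding `‖θₜ₊₁ - θ*‖² = ‖(θₜ - θ*) - η ∇g θₜ‖²` writes `⟪∇g θₜ, θₜ - θ*⟫` as
`η/2 ‖∇g θₜ‖²` plus `(‖θₜ - θ*‖² - ‖θₜ₊₁ - θ*‖²) / (2η)`, which telescopes when summed over `t`.
-/

open scoped BigOperators RealInnerProductSpace

open Finset

section FirstOrderConvexity

variable {E : Type*} [NormedAddCommGroup E] [NormedSpace ℝ E] {s : Set E} {f : E → ℝ}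
  {f' : E →L[ℝ] ℝ} {x y : E}

/-- Restricted to the segment `t ↦ lineMap x y t`, `f` is a convex function of one real variable
whose slope on `[0, 1]` is `f y - f x` and whose derivative at `1` is `f' (y - x)`. -/
theorem ConvexOn.sub_le_of_hasFDerivAt (hconv : ConvexOn ℝ s f) (hx : x ∈ s) (hy : y ∈ s)
    (hf : HasFDerivAt f f' y) : f y - f x ≤ f' (y - x) := by
  have hline : ConvexOn ℝ (AffineMap.lineMap x y ⁻¹' s) (f ∘ AffineMap.lineMap x y) :=
    hconv.comp_affineMap _
  have hderiv : HasDerivAt (f ∘ AffineMap.lineMap x y) (f' (y - x)) (1 : ℝ) := by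
    have hf1 : HasFDerivAt f f' (AffineMap.lineMap x y (1 : ℝ)) := by
      simpa only [AffineMap.lineMap_apply_one] using hf
    exact hf1.comp_hasDerivAt (1 : ℝ) AffineMap.hasDerivAt_lineMap
  have hslope := hline.slope_le_of_hasDerivAt (x := 0) (y := 1)
    (by simpa using hx) (by simpa using hy) one_pos hderiv
  simpa [slope_def_field] using hslope

end FirstOrderConvexity

section InnerProduct

variable {E : Type*} [NormedAddCommGroup E] [InnerProductSpace ℝ E]

theorem ConvexOn.sub_le_inner_of_hasGradientAt [CompleteSpace E] {s : Set E} {f : E → ℝ}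
    {u x y : E} (hconv : ConvexOn ℝ s f) (hx : x ∈ s) (hy : y ∈ s) (hf : HasGradientAt f u y) :
    f y - f x ≤ ⟪u, y - x⟫ := by
  simpa using hconv.sub_le_of_hasFDerivAt hx hy (hasGradientAt_iff_hasFDerivAt.mp hf)

theorem inner_eq_of_sub_smul {η : ℝ} (hη : η ≠ 0) (v x z : E) :
    ⟪v, x - z⟫ = η / 2 * ‖v‖ ^ 2 + 1 / (2 * η) * (‖x - z‖ ^ 2 - ‖x - η • v - z‖ ^ 2) := by
  have hexpand : ‖x - η • v - z‖ ^ 2 = ‖x - z‖ ^ 2 - 2 * η * ⟪v, x - z⟫ + η ^ 2 * ‖v‖ ^ 2 := by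
    rw [show x - η • v - z = (x - z) - η • v by abel, norm_sub_sq_real, real_inner_smul_right,
      norm_smul, real_inner_comm, Real.norm_eq_abs, mul_pow, sq_abs]
    ring
  rw [hexpand]
  field_simp
  ring

end InnerProduct

theorem summed_intermediate_inequality_general
    {E : Type*} [NormedAddCommGroup E] [InnerProductSpace ℝ E] [CompleteSpace E]
    (f g : E → ℝ) (hf : Differentiable ℝ f)
    (hconv : ConvexOn ℝ Set.univ f)
    (θstar : E) (η : ℝ) (hη : 0 < η) (T : ℕ)
    (θ : ℕ → E) (hstep : ∀ t < T, θ (t + 1) = θ t - η • gradient g (θ t)) :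
    ∑ t ∈ Finset.range T, (f (θ t) - f θstar) ≤
      ∑ t ∈ Finset.range T, ⟪gradient f (θ t) - gradient g (θ t), θ t - θstar⟫ +
        (η / 2) * ∑ t ∈ Finset.range T, ‖gradient g (θ t)‖ ^ 2 +
        (1 / (2 * η)) * ‖θ 0 - θstar‖ ^ 2 := by
  have hstep_bound : ∀ t ∈ range T, f (θ t) - f θstar ≤
      ⟪gradient f (θ t) - gradient g (θ t), θ t - θstar⟫ + η / 2 * ‖gradient g (θ t)‖ ^ 2 +
        1 / (2 * η) * (‖θ t - θstar‖ ^ 2 - ‖θ (t + 1) - θstar‖ ^ 2) := by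
    intro t ht
    have hfirst_order := hconv.sub_le_inner_of_hasGradientAt (Set.mem_univ θstar)
      (Set.mem_univ (θ t)) (hf (θ t)).hasGradientAt
    rw [hstep t (mem_range.mp ht), inner_sub_left, inner_eq_of_sub_smul hη.ne' (gradient g (θ t))]
    linarith
  calc ∑ t ∈ range T, (f (θ t) - f θstar)
      ≤ ∑ t ∈ range T, (⟪gradient f (θ t) - gradient g (θ t), θ t - θstar⟫ +
          η / 2 * ‖gradient g (θ t)‖ ^ 2 +
          1 / (2 * η) * (‖θ t - θstar‖ ^ 2 - ‖θ (t + 1) - θstar‖ ^ 2)) := sum_le_sum hstep_bound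
    _ = ∑ t ∈ range T, ⟪gradient f (θ t) - gradient g (θ t), θ t - θstar⟫ +
          η / 2 * ∑ t ∈ range T, ‖gradient g (θ t)‖ ^ 2 +
          1 / (2 * η) * (‖θ 0 - θstar‖ ^ 2 - ‖θ T - θstar‖ ^ 2) := by
      rw [sum_add_distrib, sum_add_distrib, ← mul_sum, ← mul_sum,
        sum_range_sub' (fun t => ‖θ t - θstar‖ ^ 2)]
    _ ≤ _ := by
      gcongr
      exact sub_le_self _ (sq_nonneg _)

/-- The summed intermediate inequality (Eq. (16) in the proof of Theorem 1):
combining convexity of `f` with the gradient-descent identity for `g` and telescoping. -/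
theorem summed_intermediate_inequality
    {E : Type*} [NormedAddCommGroup E] [InnerProductSpace ℝ E] [CompleteSpace E]
    (f g : E → ℝ) (hf : Differentiable ℝ f) (hg : Differentiable ℝ g)
    (hconv : ConvexOn ℝ Set.univ f)
    (θstar : E) (η : ℝ) (hη : 0 < η) (T : ℕ) (hT : 1 ≤ T)
    (θ : ℕ → E) (hstep : ∀ t < T, θ (t + 1) = θ t - η • gradient g (θ t)) :
    ∑ t ∈ Finset.range T, (f (θ t) - f θstar) ≤
      ∑ t ∈ Finset.range T, ⟪gradient f (θ t) - gradient g (θ t), θ t - θstar⟫ +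
        (η / 2) * ∑ t ∈ Finset.range T, ‖gradient g (θ t)‖ ^ 2 +
        (1 / (2 * η)) * ‖θ 0 - θstar‖ ^ 2 :=
  summed_intermediate_inequality_general f g hf hconv θstar η hη T θ hstep
end
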